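/- arXiv:2312.17303 — 2 statements merged into one kernel-verified Lean document; each statement's English description precedes it below -/
import Mathlib

section
/- For i ≥ 1, define φ_{-i} ∈ K[h] by φ_{-i} = (h+i-1)·∏_{j=m-i+1}^{m}(h-j) if 1 ≤ i ≤ m-1, and φ_{-i} = (h+i-1)·∏_{j=m-i+1, j≠1}^{m}(h-j) if i ≥ m. Then the operator δ_{-i} = φ_{-i}(h)x^{-i} maps A(m) into A(m), and a polynomial f ∈ K[h] has f(h)x^{-i} mapping A(m) into A(m) if and only if φ_{-i} divides f. -/
open Polynomial LaurentPolynomial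

/-- The operator `f(h)x^a` of the skew Laurent ring `K[h][x,x⁻¹;σ]`, `σ(h) = h-1`,
acting on `K[x,x⁻¹]` by `(f(h)x^a) ∗ x^j = f(a+j+1) x^{a+j}`
(so that `h ∗ x^j = (j+1) x^j` and `x^{±1} ∗ x^j = x^{j±1}`). -/
noncomputable def op (K : Type*) [Field K] (f : Polynomial K) (a : ℤ) :
    LaurentPolynomial K →ₗ[K] LaurentPolynomial K :=
  (Finsupp.lsum K fun j : ℤ =>
    f.eval ((a + j + 1 : ℤ) : K) •
      LinearMap.toSpanSingleton K (LaurentPolynomial K) (LaurentPolynomial.T (a + j))) ∘ₗ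
    (AddMonoidAlgebra.coeffLinearEquiv K).toLinearMap

/-- `A(m) = K + Σ_{i ≥ m} K x^i`, as a subspace of `K[x,x⁻¹]`. -/
noncomputable def Am (K : Type*) [Field K] (m : ℕ) : Submodule K (LaurentPolynomial K) :=
  Submodule.span K {p : LaurentPolynomial K | ∃ i : ℤ, (i = 0 ∨ (m : ℤ) ≤ i) ∧ p = T i}

/-- `φ_{-i} = (h+i-1)·∏_{j=m-i+1}^{m} (h-j)` where the factor `h-1` is omitted
(the condition `j ≠ 1` only matters when `i ≥ m`; for `1 ≤ i ≤ m-1` the range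
`m-i+1 ≤ j ≤ m` consists of integers `≥ 2`, so the filter removes nothing). -/
noncomputable def phi (K : Type*) [Field K] (m i : ℕ) : Polynomial K :=
  (X + Polynomial.C ((i : K) - 1)) *
    ∏ j ∈ (Finset.Icc ((m : ℤ) - i + 1) (m : ℤ)).filter (· ≠ 1),
      (X - Polynomial.C ((j : ℤ) : K))

/-!
Both `A(m)` and its image under `f(h)x^{-i}` are spanned by monomials, and `f(h)x^{-i}` sends
`x^j` to `f(j-i+1) x^{j-i}`. So `f(h)x^{-i}` preserves `A(m)` exactly when `f` vanishes at
`j - i + 1` for every exponent `j` of `A(m)` with `j - i` not an exponent of `A(m)`. These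
points are `1 - i` (from `j = 0`) and the `k ∈ [m-i+1, m]` with `k ≠ 1` (from `m ≤ j < m + i`,
`j ≠ i`), which are the distinct integer roots of `φ_{-i}`; in characteristic zero they stay
distinct in `K`, so vanishing there means divisibility by `φ_{-i}`.
-/

lemma op_T (K : Type*) [Field K] (f : K[X]) (a j : ℤ) :
    op K f a (T j) = f.eval ((a + j + 1 : ℤ) : K) • T (a + j) := by
  change (Finsupp.lsum K _) (Finsupp.single j 1) = _
  simp

section Monomials

variable {K : Type*} [Field K]

lemma smul_T_mem_span_T_iff (S : Set ℤ) (c : K) (j : ℤ) :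
    c • (T j : K[T;T⁻¹]) ∈ Submodule.span K (T '' S) ↔ c = 0 ∨ j ∈ S := by
  refine ⟨fun h => or_iff_not_imp_right.2 fun hj => ?_, ?_⟩
  · let coeffAt : K[T;T⁻¹] →ₗ[K] K :=
      Finsupp.lapply j ∘ₗ (AddMonoidAlgebra.coeffLinearEquiv K).toLinearMap
    have hspan : Submodule.span K (T '' S) ≤ LinearMap.ker coeffAt := by
      rw [Submodule.span_le]
      rintro _ ⟨k, hk, rfl⟩
      simp [coeffAt, T_apply, ne_of_mem_of_not_mem hk hj]
    simpa [coeffAt] using hspan h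
  · rintro (rfl | hj)
    · rw [zero_smul]
      exact Submodule.zero_mem _
    · exact Submodule.smul_mem _ _ (Submodule.subset_span ⟨j, hj, rfl⟩)

lemma map_op_span_T_le_iff (f : K[X]) (a : ℤ) (S : Set ℤ) :
    (Submodule.span K (T '' S)).map (op K f a) ≤ Submodule.span K (T '' S) ↔
      ∀ k : ℤ, k - a - 1 ∈ S → k - 1 ∉ S → f.IsRoot (k : K) := by
  simp only [Submodule.map_span_le, Set.forall_mem_image, op_T, smul_T_mem_span_T_iff]
  refine ⟨fun H k hk hk' => ?_, fun H j hj => or_iff_not_imp_right.2 fun hj' => ?_⟩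
  · have := H hk
    rwa [show a + (k - a - 1) + 1 = k by ring, show a + (k - a - 1) = k - 1 by ring,
      or_iff_left hk'] at this
  · exact H (a + j + 1) (by rwa [show a + j + 1 - a - 1 = j by ring])
      (by rwa [show a + j + 1 - 1 = a + j by ring])

end Monomials

lemma prod_X_sub_C_dvd_iff {K ι : Type*} [Field K] (s : Finset ι) {r : ι → K}
    (hr : Set.InjOn r s) (f : K[X]) :
    (∏ k ∈ s, (X - Polynomial.C (r k))) ∣ f ↔ ∀ k ∈ s, f.IsRoot (r k) := by
  refine ⟨fun h k hk =>
    dvd_iff_isRoot.1 ((Finset.dvd_prod_of_mem (fun k => X - Polynomial.C (r k)) hk).trans h),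
    fun h => Finset.prod_dvd_of_coprime ?_ fun k hk => dvd_iff_isRoot.2 (h k hk)⟩
  intro k hk l hl hkl
  exact isCoprime_X_sub_C_of_isUnit_sub (sub_ne_zero.2 (hr.ne hk hl hkl)).isUnit

def amExponents (m : ℕ) : Set ℤ := {j | j = 0 ∨ (m : ℤ) ≤ j}

lemma Am_eq_span_T (K : Type*) [Field K] (m : ℕ) :
    Am K m = Submodule.span K (T '' amExponents m) := by
  unfold Am
  congr 1
  ext p
  simp [amExponents, eq_comm]

noncomputable def phiRoots (m i : ℕ) : Finset ℤ :=
  insert (1 - (i : ℤ)) ((Finset.Icc ((m : ℤ) - i + 1) m).filter (· ≠ 1))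

lemma phi_eq_prod_phiRoots (K : Type*) [Field K] {m : ℕ} (hm : 1 ≤ m) (i : ℕ) :
    phi K m i = ∏ k ∈ phiRoots m i, (X - Polynomial.C (k : K)) := by
  have hnotMem : (1 - i : ℤ) ∉ (Finset.Icc ((m : ℤ) - i + 1) m).filter (· ≠ 1) := by
    simp only [Finset.mem_filter, Finset.mem_Icc]
    omega
  rw [phiRoots, Finset.prod_insert hnotMem, phi, sub_eq_add_neg (X : K[X]), ← map_neg]
  congr 3
  push_cast
  ring

lemma mem_phiRoots_iff {m i : ℕ} (hm : 1 ≤ m) (hi : 1 ≤ i) (k : ℤ) :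
    k ∈ phiRoots m i ↔ k + i - 1 ∈ amExponents m ∧ k - 1 ∉ amExponents m := by
  simp only [phiRoots, amExponents, Finset.mem_insert, Finset.mem_filter, Finset.mem_Icc,
    Set.mem_ofPred_eq]
  omega

/-- for `i ≥ 1` the operator `δ₋ᵢ = φ₋ᵢ(h)x^{-i}` maps `A(m)` into
`A(m)`, and for `f ∈ K[h]`, the operator `f(h)x^{-i}` maps `A(m)` into `A(m)` if
and only if `φ₋ᵢ` divides `f`. -/
theorem stmt4 (K : Type*) [Field K] [CharZero K] (m : ℕ) (hm : 2 ≤ m)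
    (i : ℕ) (h1 : 1 ≤ i) :
    Submodule.map (op K (phi K m i) (-(i : ℤ))) (Am K m) ≤ Am K m ∧
      ∀ f : Polynomial K,
        (Submodule.map (op K f (-(i : ℤ))) (Am K m) ≤ Am K m ↔ phi K m i ∣ f) := by
  have key : ∀ f : K[X], (Am K m).map (op K f (-(i : ℤ))) ≤ Am K m ↔ phi K m i ∣ f := by
    intro f
    rw [Am_eq_span_T, map_op_span_T_le_iff, phi_eq_prod_phiRoots K (by omega),
      prod_X_sub_C_dvd_iff _ Int.cast_injective.injOn]
    simp only [sub_neg_eq_add, mem_phiRoots_iff (by omega : 1 ≤ m) h1, and_imp]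
  exact ⟨(key _).2 dvd_rfl, key⟩
end

section
/- The center of the generalized Weyl algebra 𝒜 = K[h][X, Y; σ^m, a], with σ(h)=h-1 and a = (h+m-1)(h-2)⋯(h-m), equals K. -/
open Polynomial

open Polynomial

/-- The defining element `a = (h+m-1)(h-2)(h-3)⋯(h-m)`. -/
noncomputable def aPoly (K : Type*) [Field K] (m : ℕ) : Polynomial K :=
  (X + C ((m : K) - 1)) * ∏ j ∈ Finset.Icc 2 m, (X - C (j : K))

/-- Defining relations of the generalized Weyl algebra
`𝒜 = K[h][X,Y;σ^m,a]`, `σ(h) = h-1`, `a = (h+m-1)(h-2)⋯(h-m)`: generators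
`h` (index 0), `X` (index 1), `Y` (index 2) with `Xh = (h-m)X`, `Yh = (h+m)Y`,
`YX = a`, `XY = σ^m(a) = a(h-m)`. -/
inductive gwaRel2 (K : Type*) [Field K] (m : ℕ) :
    FreeAlgebra K (Fin 3) → FreeAlgebra K (Fin 3) → Prop
  | xh : gwaRel2 K m (FreeAlgebra.ι K 1 * FreeAlgebra.ι K 0)
      ((FreeAlgebra.ι K 0 - algebraMap K _ (m : K)) * FreeAlgebra.ι K 1)
  | yh : gwaRel2 K m (FreeAlgebra.ι K 2 * FreeAlgebra.ι K 0)
      ((FreeAlgebra.ι K 0 + algebraMap K _ (m : K)) * FreeAlgebra.ι K 2)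
  | yx : gwaRel2 K m (FreeAlgebra.ι K 2 * FreeAlgebra.ι K 1)
      (aeval (FreeAlgebra.ι K 0) (aPoly K m))
  | xy : gwaRel2 K m (FreeAlgebra.ι K 1 * FreeAlgebra.ι K 2)
      (aeval (FreeAlgebra.ι K 0) ((aPoly K m).comp (X - C (m : K))))

/-- The generalized Weyl algebra `𝒜 = K[h][X,Y;σ^m, (h+m-1)(h-2)⋯(h-m)]`. -/
abbrev GWA2 (K : Type*) [Field K] (m : ℕ) := RingQuot (gwaRel2 K m)

/-!
Every element of `𝒜` has a unique normal form `∑ₙ pₙ(h) wₙ`, where `wₙ = Xⁿ` for `n ≥ 0` and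
`wₙ = Y⁻ⁿ` for `n < 0`. Spanning follows from the defining relations; uniqueness is read off the
action of `𝒜` on `ℤ → K[t]` in which `h` multiplies the `n`-th entry by `t + nm`, `X` shifts
entries up and `Y` shifts them down multiplying by `a(t + nm)`: applied to `δ₀`, the normal form
`∑ₙ pₙ(h) wₙ` has `n`-th entry `pₙ(t + nm)` times a nonzero polynomial.

Since `wₙ h = (h - nm) wₙ`, an element commuting with `h` has `n m pₙ = 0` for all `n`, so it is
some `p(h)`; commuting with `X` then forces `p(h - m) = p(h)`, and in characteristic zero a
polynomial invariant under a nonzero translation is constant.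
-/

theorem SemiconjBy.aeval {R A : Type*} [CommSemiring R] [Semiring A] [Algebra R A] {x h h' : A}
    (H : SemiconjBy x h h') (p : R[X]) : SemiconjBy x (aeval h p) (aeval h' p) := by
  induction p using Polynomial.induction_on' with
  | add p q hp hq => simpa only [map_add] using hp.add_right hq
  | monomial n r =>
    simp only [aeval_monomial]
    exact SemiconjBy.mul_right (Algebra.commute_algebraMap_right r x) (H.pow_right n)

theorem SemiconjBy.pow_of_add_algebraMap {R A : Type*} [CommSemiring R] [Semiring A]
    [Algebra R A] {x h : A} {c : R} (H : SemiconjBy x h (h + algebraMap R A c)) (k : ℕ) :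
    SemiconjBy (x ^ k) h (h + algebraMap R A (k * c)) := by
  induction k with
  | zero => simp
  | succ k ih =>
    have hk := ih.add_right (Algebra.commute_algebraMap_right c (x ^ k))
    rw [add_assoc, ← map_add, ← add_one_mul] at hk
    rw [pow_succ]
    exact_mod_cast hk.mul_left H

theorem Polynomial.eq_C_eval_zero_of_comp_X_add_C_eq_self {R : Type*} [CommRing R] [IsDomain R]
    [CharZero R] {p : R[X]} {c : R} (hc : c ≠ 0) (h : p.comp (X + C c) = p) :
    p = C (p.eval 0) := by
  have periodic (n : ℕ) : p.eval (n * c) = p.eval 0 := by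
    induction n with
    | zero => simp
    | succ n ih =>
      rw [← ih]
      conv_rhs => rw [← h]
      simp [eval_comp, add_one_mul]
  apply eq_of_infinite_eval_eq
  refine Set.infinite_of_injective_forall_mem (f := fun n : ℕ => (n : R) * c) ?_ ?_
  · intro a b hab
    exact_mod_cast mul_right_cancel₀ hc hab
  · intro n
    simp [periodic]

noncomputable section

namespace GWA2

variable (K : Type*) [Field K] (m : ℕ)

def genH : GWA2 K m := RingQuot.mkAlgHom K (gwaRel2 K m) (FreeAlgebra.ι K 0)
def genX : GWA2 K m := RingQuot.mkAlgHom K (gwaRel2 K m) (FreeAlgebra.ι K 1)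
def genY : GWA2 K m := RingQuot.mkAlgHom K (gwaRel2 K m) (FreeAlgebra.ι K 2)

theorem genX_mul_genH :
    genX K m * genH K m = (genH K m - algebraMap K _ (m : K)) * genX K m := by
  simpa only [genX, genH, map_mul, map_sub, AlgHom.commutes]
    using RingQuot.mkAlgHom_rel K (gwaRel2.xh (K := K) (m := m))

theorem genY_mul_genH :
    genY K m * genH K m = (genH K m + algebraMap K _ (m : K)) * genY K m := by
  simpa only [genY, genH, map_mul, map_add, AlgHom.commutes]
    using RingQuot.mkAlgHom_rel K (gwaRel2.yh (K := K) (m := m))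

theorem genY_mul_genX : genY K m * genX K m = aeval (genH K m) (aPoly K m) := by
  simpa only [genX, genY, genH, map_mul, ← aeval_algHom_apply]
    using RingQuot.mkAlgHom_rel K (gwaRel2.yx (K := K) (m := m))

theorem genX_mul_genY :
    genX K m * genY K m = aeval (genH K m) ((aPoly K m).comp (X - C (m : K))) := by
  simpa only [genX, genY, genH, map_mul, ← aeval_algHom_apply]
    using RingQuot.mkAlgHom_rel K (gwaRel2.xy (K := K) (m := m))

theorem genX_mul_aeval (p : K[X]) :
    genX K m * aeval (genH K m) p = aeval (genH K m) (p.comp (X - C (m : K))) * genX K m := by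
  rw [aeval_comp, map_sub, aeval_X, aeval_C]
  exact SemiconjBy.aeval (genX_mul_genH K m) p

theorem genY_mul_aeval (p : K[X]) :
    genY K m * aeval (genH K m) p = aeval (genH K m) (p.comp (X + C (m : K))) * genY K m := by
  rw [aeval_comp, map_add, aeval_X, aeval_C]
  exact SemiconjBy.aeval (genY_mul_genH K m) p

def gradedGen (n : ℤ) : GWA2 K m :=
  if 0 ≤ n then genX K m ^ n.toNat else genY K m ^ (-n).toNat

theorem gradedGen_of_nonneg {n : ℤ} (hn : 0 ≤ n) : gradedGen K m n = genX K m ^ n.toNat :=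
  if_pos hn

theorem gradedGen_of_nonpos {n : ℤ} (hn : n ≤ 0) : gradedGen K m n = genY K m ^ (-n).toNat := by
  obtain hn | rfl := hn.lt_or_eq
  · exact if_neg hn.not_ge
  · simp [gradedGen]

theorem gradedGen_zero : gradedGen K m 0 = 1 := by simp [gradedGen]

theorem gradedGen_one : gradedGen K m 1 = genX K m := by simp [gradedGen]

theorem gradedGen_mul_genH (n : ℤ) :
    gradedGen K m n * genH K m = (genH K m - algebraMap K _ (n * m)) * gradedGen K m n := by
  obtain hn | hn := le_total 0 n
  · have H : SemiconjBy (genX K m) (genH K m) (genH K m + algebraMap K _ (-m)) := by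
      rw [map_neg, ← sub_eq_add_neg]
      exact genX_mul_genH K m
    have := H.pow_of_add_algebraMap n.toNat
    rwa [show ((n.toNat : ℕ) : K) = n by rw [← Int.cast_natCast, Int.toNat_of_nonneg hn],
      mul_neg, map_neg, ← sub_eq_add_neg, ← gradedGen_of_nonneg K m hn] at this
  · have := SemiconjBy.pow_of_add_algebraMap (genY_mul_genH K m) (-n).toNat
    rwa [show (((-n).toNat : ℕ) : K) = -(n : K) by
        rw [← Int.cast_natCast, Int.toNat_of_nonneg (neg_nonneg.2 hn), Int.cast_neg],
      neg_mul, map_neg, ← sub_eq_add_neg, ← gradedGen_of_nonpos K m hn] at this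

theorem genX_mul_gradedGen (n : ℤ) :
    ∃ q : K[X], genX K m * gradedGen K m n = aeval (genH K m) q * gradedGen K m (n + 1) := by
  obtain hn | hn := le_or_gt 0 n
  · refine ⟨1, ?_⟩
    rw [map_one, one_mul, gradedGen_of_nonneg K m hn, gradedGen_of_nonneg K m (by omega),
      show (n + 1).toNat = n.toNat + 1 by omega, pow_succ']
  · refine ⟨(aPoly K m).comp (X - C (m : K)), ?_⟩
    rw [gradedGen_of_nonpos K m hn.le, gradedGen_of_nonpos K m (by omega),
      show (-n).toNat = (-(n + 1)).toNat + 1 by omega, pow_succ', ← mul_assoc, genX_mul_genY]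

theorem genY_mul_gradedGen (n : ℤ) :
    ∃ q : K[X], genY K m * gradedGen K m n = aeval (genH K m) q * gradedGen K m (n - 1) := by
  obtain hn | hn := le_or_gt n 0
  · refine ⟨1, ?_⟩
    rw [map_one, one_mul, gradedGen_of_nonpos K m hn, gradedGen_of_nonpos K m (by omega),
      show (-(n - 1)).toNat = (-n).toNat + 1 by omega, pow_succ']
  · refine ⟨aPoly K m, ?_⟩
    rw [gradedGen_of_nonneg K m hn.le, gradedGen_of_nonneg K m (by omega),
      show n.toNat = (n - 1).toNat + 1 by omega, pow_succ', ← mul_assoc, genY_mul_genX]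

def normalForm : (ℤ →₀ K[X]) →ₗ[K] GWA2 K m :=
  Finsupp.lsum K fun n =>
    (LinearMap.mulRight K (gradedGen K m n)).comp (aeval (genH K m)).toLinearMap

theorem normalForm_single (n : ℤ) (p : K[X]) :
    normalForm K m (Finsupp.single n p) = aeval (genH K m) p * gradedGen K m n :=
  Finsupp.lsum_single _ _ _ _

theorem aeval_mul_gradedGen_mem_range (n : ℤ) (p : K[X]) :
    aeval (genH K m) p * gradedGen K m n ∈ LinearMap.range (normalForm K m) :=
  ⟨Finsupp.single n p, normalForm_single K m n p⟩

theorem mul_mem_range_normalForm {a : GWA2 K m}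
    (ha : ∀ (n : ℤ) (p : K[X]),
      a * (aeval (genH K m) p * gradedGen K m n) ∈ LinearMap.range (normalForm K m))
    {s : GWA2 K m} (hs : s ∈ LinearMap.range (normalForm K m)) :
    a * s ∈ LinearMap.range (normalForm K m) := by
  obtain ⟨g, rfl⟩ := hs
  induction g using Finsupp.induction_linear with
  | zero => simp
  | add f g hf hg => rw [map_add, mul_add]; exact add_mem hf hg
  | single n p => rw [normalForm_single]; exact ha n p

theorem genH_mul_mem_range_normalForm {s : GWA2 K m} (hs : s ∈ LinearMap.range (normalForm K m)) :
    genH K m * s ∈ LinearMap.range (normalForm K m) := by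
  refine mul_mem_range_normalForm K m (fun n p => ?_) hs
  rw [← mul_assoc, show genH K m * aeval (genH K m) p = aeval (genH K m) (X * p) by simp]
  exact aeval_mul_gradedGen_mem_range K m n _

theorem genX_mul_mem_range_normalForm {s : GWA2 K m} (hs : s ∈ LinearMap.range (normalForm K m)) :
    genX K m * s ∈ LinearMap.range (normalForm K m) := by
  refine mul_mem_range_normalForm K m (fun n p => ?_) hs
  obtain ⟨q, hq⟩ := genX_mul_gradedGen K m n
  rw [← mul_assoc, genX_mul_aeval, mul_assoc, hq, ← mul_assoc, ← map_mul]
  exact aeval_mul_gradedGen_mem_range K m _ _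

theorem genY_mul_mem_range_normalForm {s : GWA2 K m} (hs : s ∈ LinearMap.range (normalForm K m)) :
    genY K m * s ∈ LinearMap.range (normalForm K m) := by
  refine mul_mem_range_normalForm K m (fun n p => ?_) hs
  obtain ⟨q, hq⟩ := genY_mul_gradedGen K m n
  rw [← mul_assoc, genY_mul_aeval, mul_assoc, hq, ← mul_assoc, ← map_mul]
  exact aeval_mul_gradedGen_mem_range K m _ _

theorem normalForm_surjective : Function.Surjective (normalForm K m) := by
  suffices ∀ (z s : GWA2 K m), s ∈ LinearMap.range (normalForm K m) →
      z * s ∈ LinearMap.range (normalForm K m) by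
    intro z
    simpa using this z 1 ⟨Finsupp.single 0 1, by simp [normalForm_single, gradedGen_zero]⟩
  intro z
  obtain ⟨f, rfl⟩ := RingQuot.mkAlgHom_surjective K (gwaRel2 K m) z
  induction f using FreeAlgebra.induction with
  | grade0 c =>
    intro s hs
    rw [AlgHom.commutes, ← Algebra.smul_def]
    exact Submodule.smul_mem _ c hs
  | grade1 i =>
    fin_cases i
    exacts [fun _ => genH_mul_mem_range_normalForm K m, fun _ => genX_mul_mem_range_normalForm K m,
      fun _ => genY_mul_mem_range_normalForm K m]
  | mul a b ha hb =>
    intro s hs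
    rw [map_mul, mul_assoc]
    exact ha _ (hb _ hs)
  | add a b ha hb =>
    intro s hs
    rw [map_add, add_mul]
    exact add_mem (ha s hs) (hb s hs)

def shiftVar (n : ℤ) : K[X] := X + C ((n : K) * m)

def hOp : Module.End K (ℤ → K[X]) :=
  LinearMap.pi fun n => (LinearMap.mulLeft K (shiftVar K m n)).comp (LinearMap.proj n)

def xOp : Module.End K (ℤ → K[X]) := LinearMap.funLeft K K[X] (· - 1)

def yOp : Module.End K (ℤ → K[X]) :=
  LinearMap.pi fun n =>
    (LinearMap.mulLeft K ((aPoly K m).comp (shiftVar K m n))).comp (LinearMap.proj (n + 1))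

@[simp] theorem hOp_apply (f : ℤ → K[X]) (n : ℤ) : hOp K m f n = shiftVar K m n * f n := rfl

@[simp] theorem xOp_apply (f : ℤ → K[X]) (n : ℤ) : xOp K f n = f (n - 1) := rfl

@[simp] theorem yOp_apply (f : ℤ → K[X]) (n : ℤ) :
    yOp K m f n = (aPoly K m).comp (shiftVar K m n) * f (n + 1) := rfl

theorem shiftVar_sub_one (n : ℤ) : shiftVar K m (n - 1) = shiftVar K m n - C (m : K) := by
  simp only [shiftVar, Int.cast_sub, Int.cast_one, sub_mul, one_mul, C_sub]
  ring

theorem shiftVar_add_one (n : ℤ) : shiftVar K m (n + 1) = shiftVar K m n + C (m : K) := by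
  simp only [shiftVar, Int.cast_add, Int.cast_one, add_mul, one_mul, C_add]
  ring

theorem aeval_hOp_apply (p : K[X]) (f : ℤ → K[X]) (n : ℤ) :
    aeval (hOp K m) p f n = p.comp (shiftVar K m n) * f n := by
  induction p using Polynomial.induction_on' with
  | add p q hp hq =>
    simp only [map_add, LinearMap.add_apply, Pi.add_apply, hp, hq, add_comp, add_mul]
  | monomial k c =>
    have hpow (f : ℤ → K[X]) : (hOp K m ^ k) f n = shiftVar K m n ^ k * f n := by
      induction k generalizing f with
      | zero => simp
      | succ k ih => rw [pow_succ, Module.End.mul_apply, ih, hOp_apply, pow_succ, mul_assoc]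
    rw [aeval_monomial, Module.End.mul_apply, Module.algebraMap_end_apply, Pi.smul_apply, hpow,
      ← C_mul_X_pow_eq_monomial, mul_comp, C_comp, X_pow_comp, smul_eq_C_mul, mul_assoc]

theorem xOp_mul_hOp : xOp K * hOp K m = (hOp K m - algebraMap K _ (m : K)) * xOp K := by
  ext f n : 2
  simp only [Module.End.mul_apply, LinearMap.sub_apply, Module.algebraMap_end_apply, hOp_apply,
    xOp_apply, Pi.sub_apply, Pi.smul_apply, smul_eq_C_mul, shiftVar_sub_one]
  ring

theorem yOp_mul_hOp : yOp K m * hOp K m = (hOp K m + algebraMap K _ (m : K)) * yOp K m := by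
  ext f n : 2
  simp only [Module.End.mul_apply, LinearMap.add_apply, Module.algebraMap_end_apply, hOp_apply,
    yOp_apply, Pi.add_apply, Pi.smul_apply, smul_eq_C_mul, shiftVar_add_one]
  ring

theorem yOp_mul_xOp : yOp K m * xOp K = aeval (hOp K m) (aPoly K m) := by
  ext f n : 2
  simp [aeval_hOp_apply]

theorem xOp_mul_yOp : xOp K * yOp K m = aeval (hOp K m) ((aPoly K m).comp (X - C (m : K))) := by
  ext f n : 2
  simp [aeval_hOp_apply, comp_assoc, shiftVar_sub_one]

def rep : GWA2 K m →ₐ[K] Module.End K (ℤ → K[X]) :=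
  RingQuot.liftAlgHom K ⟨FreeAlgebra.lift K ![hOp K m, xOp K, yOp K m], by
    intro a b hab
    induction hab with
    | xh => simpa using xOp_mul_hOp K m
    | yh => simpa using yOp_mul_hOp K m
    | yx => simpa [← aeval_algHom_apply] using yOp_mul_xOp K m
    | xy => simpa [← aeval_algHom_apply] using xOp_mul_yOp K m⟩

@[simp] theorem rep_genH : rep K m (genH K m) = hOp K m := by
  simp [rep, genH]

@[simp] theorem rep_genX : rep K m (genX K m) = xOp K := by
  simp [rep, genX]

@[simp] theorem rep_genY : rep K m (genY K m) = yOp K m := by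
  simp [rep, genY]

def vac : GWA2 K m →ₗ[K] ℤ → K[X] :=
  LinearMap.applyₗ (Pi.single 0 1) ∘ₗ (rep K m).toLinearMap

theorem vac_mul (a z : GWA2 K m) : vac K m (a * z) = rep K m a (vac K m z) := by
  simp [vac]

theorem xOp_single (n : ℤ) (p : K[X]) : xOp K (Pi.single n p) = Pi.single (n + 1) p := by
  ext k : 1
  simp only [xOp_apply, Pi.single_apply, sub_eq_iff_eq_add]

theorem yOp_single (n : ℤ) (p : K[X]) :
    yOp K m (Pi.single n p) = Pi.single (n - 1) ((aPoly K m).comp (shiftVar K m (n - 1)) * p) := by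
  ext k : 1
  by_cases hk : k = n - 1
  · subst hk
    simp
  · simp [hk, show k + 1 ≠ n by omega]

theorem aPoly_ne_zero : aPoly K m ≠ 0 :=
  mul_ne_zero (X_add_C_ne_zero _) (Finset.prod_ne_zero_iff.2 fun _ _ => X_sub_C_ne_zero _)

theorem exists_vac_gradedGen (n : ℤ) :
    ∃ c : K[X], c ≠ 0 ∧ vac K m (gradedGen K m n) = Pi.single n c := by
  obtain hn | hn := le_total 0 n
  · lift n to ℕ using hn
    refine ⟨1, one_ne_zero, ?_⟩
    rw [gradedGen_of_nonneg K m (Int.natCast_nonneg n), Int.toNat_natCast]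
    induction n with
    | zero => simp [vac]
    | succ k ih => rw [pow_succ', vac_mul, ih, rep_genX, xOp_single, Nat.cast_succ]
  · obtain ⟨j, rfl⟩ := Int.exists_eq_neg_ofNat hn
    rw [gradedGen_of_nonpos K m hn, neg_neg, Int.toNat_natCast]
    clear hn
    induction j with
    | zero => exact ⟨1, one_ne_zero, by simp [vac]⟩
    | succ j ih =>
      obtain ⟨c, hc, hvac⟩ := ih
      refine ⟨(aPoly K m).comp (shiftVar K m (-(j + 1 : ℕ))) * c,
        mul_ne_zero (comp_X_add_C_ne_zero_iff.2 (aPoly_ne_zero K m)) hc, ?_⟩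
      rw [pow_succ', vac_mul, hvac, rep_genY, yOp_single,
        show -(j : ℤ) - 1 = -((j + 1 : ℕ) : ℤ) by push_cast; ring]

def vacCoeff (n : ℤ) : K[X] := vac K m (gradedGen K m n) n

theorem vac_gradedGen (n : ℤ) : vac K m (gradedGen K m n) = Pi.single n (vacCoeff K m n) := by
  obtain ⟨c, -, hc⟩ := exists_vac_gradedGen K m n
  rw [vacCoeff, hc, Pi.single_eq_same]

theorem vacCoeff_ne_zero (n : ℤ) : vacCoeff K m n ≠ 0 := by
  obtain ⟨c, hc0, hc⟩ := exists_vac_gradedGen K m n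
  rwa [vacCoeff, hc, Pi.single_eq_same]

theorem vac_aeval_mul_gradedGen (p : K[X]) (n : ℤ) :
    vac K m (aeval (genH K m) p * gradedGen K m n)
      = Pi.single n (p.comp (shiftVar K m n) * vacCoeff K m n) := by
  ext k : 1
  rw [vac_mul, ← aeval_algHom_apply, rep_genH, aeval_hOp_apply, vac_gradedGen, Pi.single_apply,
    Pi.single_apply]
  split_ifs with hk
  · rw [hk]
  · rw [mul_zero]

theorem vac_normalForm_apply (g : ℤ →₀ K[X]) (k : ℤ) :
    vac K m (normalForm K m g) k = (g k).comp (shiftVar K m k) * vacCoeff K m k := by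
  induction g using Finsupp.induction_linear with
  | zero => simp
  | add f g hf hg =>
    rw [map_add, map_add, Pi.add_apply, hf, hg, Finsupp.add_apply, add_comp, add_mul]
  | single n p =>
    rw [normalForm_single, vac_aeval_mul_gradedGen]
    obtain rfl | hk := eq_or_ne k n
    · simp
    · simp [hk, Finsupp.single_eq_of_ne hk]

theorem normalForm_injective : Function.Injective (normalForm K m) := by
  rw [← LinearMap.ker_eq_bot, LinearMap.ker_eq_bot']
  intro g hg
  refine Finsupp.ext fun k => ?_
  have := vac_normalForm_apply K m g k
  rw [hg, map_zero, Pi.zero_apply, eq_comm, mul_eq_zero] at this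
  exact comp_X_add_C_eq_zero_iff.1 (this.resolve_right (vacCoeff_ne_zero K m k))

theorem vac_genH_mul (z : GWA2 K m) (k : ℤ) :
    vac K m (genH K m * z) k = shiftVar K m k * vac K m z k := by
  rw [vac_mul, rep_genH, hOp_apply]

theorem vac_mul_genH (z : GWA2 K m) (k : ℤ) : vac K m (z * genH K m) k = X * vac K m z k := by
  obtain ⟨g, rfl⟩ := normalForm_surjective K m z
  induction g using Finsupp.induction_linear with
  | zero => simp
  | add f g hf hg =>
    rw [map_add, add_mul, map_add, map_add, Pi.add_apply, Pi.add_apply, hf, hg, mul_add]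
  | single n p =>
    have : (p * (X - C ((n : K) * m))).comp (shiftVar K m n) = X * p.comp (shiftVar K m n) := by
      rw [mul_comp, sub_comp, X_comp, C_comp, shiftVar, add_sub_cancel_right, mul_comm]
    have hsub : genH K m - algebraMap K _ (n * m) = aeval (genH K m) (X - C ((n : K) * m)) := by
      simp
    rw [normalForm_single, mul_assoc, gradedGen_mul_genH, hsub, ← mul_assoc, ← map_mul,
      vac_aeval_mul_gradedGen, vac_aeval_mul_gradedGen, this, Pi.single_apply, Pi.single_apply]
    split_ifs <;> simp [mul_assoc]

theorem eq_aeval_genH_of_genH_mul_eq [CharZero K] {z : GWA2 K m} (hm : m ≠ 0)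
    (hz : genH K m * z = z * genH K m) : ∃ p : K[X], z = aeval (genH K m) p := by
  obtain ⟨g, rfl⟩ := normalForm_surjective K m z
  have vac_eq_zero (k : ℤ) (hk : k ≠ 0) : vac K m (normalForm K m g) k = 0 := by
    have h := vac_genH_mul K m (normalForm K m g) k
    rw [hz, vac_mul_genH, shiftVar] at h
    have : C ((k : K) * m) * vac K m (normalForm K m g) k = 0 := by linear_combination -h
    simpa [hk, hm] using this
  have support_zero : g = Finsupp.single 0 (g 0) := by
    refine Finsupp.ext fun k => ?_
    obtain rfl | hk := eq_or_ne k 0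
    · simp
    · have := vac_eq_zero k hk
      rw [vac_normalForm_apply, mul_eq_zero] at this
      rw [Finsupp.single_eq_of_ne hk,
        comp_X_add_C_eq_zero_iff.1 (this.resolve_right (vacCoeff_ne_zero K m k))]
  refine ⟨g 0, ?_⟩
  rw [support_zero, normalForm_single, gradedGen_zero, mul_one, Finsupp.single_eq_same]

theorem comp_X_sub_C_eq_of_genX_mul_eq {p : K[X]}
    (h : genX K m * aeval (genH K m) p = aeval (genH K m) p * genX K m) :
    p.comp (X - C (m : K)) = p := by
  rw [genX_mul_aeval, ← gradedGen_one, ← normalForm_single, ← normalForm_single] at h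
  exact Finsupp.single_injective 1 (normalForm_injective K m h)

end GWA2

end

/-- the center of the generalized Weyl algebra
`𝒜 = K[h][X,Y;σ^m, (h+m-1)(h-2)⋯(h-m)]` equals `K`. -/
theorem stmt10 (K : Type*) [Field K] [CharZero K] (m : ℕ) (hm : 2 ≤ m) :
    Subalgebra.center K (GWA2 K m) = ⊥ := by
  refine le_antisymm (fun z hz => ?_) bot_le
  rw [Subalgebra.mem_center_iff] at hz
  have hm0 : m ≠ 0 := by omega
  obtain ⟨p, rfl⟩ := GWA2.eq_aeval_genH_of_genH_mul_eq K m hm0 (hz _)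
  have hp := GWA2.comp_X_sub_C_eq_of_genX_mul_eq K m (hz _)
  rw [sub_eq_add_neg, ← C_neg] at hp
  rw [eq_C_eval_zero_of_comp_X_add_C_eq_self (neg_ne_zero.2 (Nat.cast_ne_zero.2 hm0)) hp, aeval_C]
  exact Subalgebra.algebraMap_mem _ _
end
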